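/- (Casorati determinant D_1, type q-(A_2+A_1)^{(1)}.) Suppose Y ∈ ℂ[[X]] satisfies (1−a_1X)(1−a_2X)·Y(qX) = Y, and let (P, Q) be a Padé pair for Y. Then there exists a polynomial R ∈ ℂ[X] with deg R ≤ 1 such that P(X)·Q(qX) − (1−a_1X)(1−a_2X)·P(qX)·Q(X) = X^{m+n+1}·R. -/

import Mathlib

/-!
Write `P = Y Q - X^N E` with `N = m + n + 1`. Substituting this into the Casorati determinant
`P(X) Q(qX) - A(X) P(qX) Q(X)`, the terms containing `Y` cancel because `A(X) Y(qX) = Y(X)`, and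
what is left, `A(X) (qX)^N E(qX) Q(X) - X^N E(X) Q(qX)`, is divisible by `X^N`. The determinant
is a polynomial of degree at most `m + n + deg A`, so for `deg A ≤ 2` the quotient has degree `≤ 1`.
-/

open Polynomial

namespace PowerSeries

variable {R : Type*} [CommRing R]

theorem X_pow_dvd_rescale {f : PowerSeries R} {N : ℕ} (q : R) (h : X ^ N ∣ f) :
    X ^ N ∣ rescale q f := by
  obtain ⟨g, rfl⟩ := h
  rw [map_mul, map_pow, rescale_X, mul_pow]
  exact dvd_mul_of_dvd_left (dvd_mul_left _ _) _

theorem X_pow_dvd_qCasorati {q : R} {A Y P Q : PowerSeries R} {N : ℕ}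
    (hY : A * rescale q Y = Y) (hPade : X ^ N ∣ Y * Q - P) :
    X ^ N ∣ P * rescale q Q - A * rescale q P * Q := by
  obtain ⟨E, hE⟩ := hPade
  have hcasorati : P * rescale q Q - A * rescale q P * Q
      = A * rescale q (X ^ N * E) * Q - X ^ N * E * rescale q Q := by
    rw [← hE, map_sub, map_mul]
    linear_combination (-(Q * rescale q Q)) * hY
  rw [hcasorati]
  exact dvd_sub (dvd_mul_of_dvd_left (dvd_mul_of_dvd_right (X_pow_dvd_rescale q ⟨E, rfl⟩) _) _)
    (dvd_mul_of_dvd_left (dvd_mul_right _ _) _)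

end PowerSeries

namespace Polynomial

variable {R : Type*} [CommRing R]

theorem coe_comp_C_mul_X (q : R) (p : R[X]) :
    ((p.comp (C q * X) : R[X]) : PowerSeries R) = PowerSeries.rescale q (p : PowerSeries R) := by
  ext k
  rw [coeff_coe, comp_C_mul_X_coeff, PowerSeries.coeff_rescale, coeff_coe, mul_comm]

theorem X_pow_dvd_coe_iff {p : R[X]} {N : ℕ} :
    (PowerSeries.X ^ N ∣ (p : PowerSeries R)) ↔ X ^ N ∣ p := by
  simp only [PowerSeries.X_pow_dvd_iff, X_pow_dvd_iff, coeff_coe]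

noncomputable def qCasorati (q : R) (A P Q : R[X]) : R[X] :=
  P * Q.comp (C q * X) - A * P.comp (C q * X) * Q

theorem natDegree_comp_C_mul_X_le (q : R) (p : R[X]) :
    (p.comp (C q * X)).natDegree ≤ p.natDegree :=
  natDegree_le_iff_coeff_eq_zero.2 fun k hk => by
    rw [comp_C_mul_X_coeff, coeff_eq_zero_of_natDegree_lt (by exact_mod_cast hk), zero_mul]

theorem natDegree_qCasorati_le {q : R} {A P Q : R[X]} {d m n : ℕ} (hA : A.natDegree ≤ d)
    (hP : P.natDegree ≤ m) (hQ : Q.natDegree ≤ n) :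
    (qCasorati q A P Q).natDegree ≤ m + n + d := by
  have hPq := (natDegree_comp_C_mul_X_le q P).trans hP
  have hQq := (natDegree_comp_C_mul_X_le q Q).trans hQ
  refine (natDegree_sub_le_of_le (natDegree_mul_le_of_le hP hQq)
    (natDegree_mul_le_of_le (natDegree_mul_le_of_le hA hPq) hQ)).trans (max_le ?_ ?_) <;> omega

theorem exists_qCasorati_eq_X_pow_mul {q : R} {A P Q : R[X]} {Y : PowerSeries R} {d m n : ℕ}
    (hY : (A : PowerSeries R) * PowerSeries.rescale q Y = Y)
    (hA : A.natDegree ≤ d + 1) (hP : P.natDegree ≤ m) (hQ : Q.natDegree ≤ n)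
    (hPade : PowerSeries.X ^ (m + n + 1) ∣ Y * (Q : PowerSeries R) - (P : PowerSeries R)) :
    ∃ S : R[X], S.natDegree ≤ d ∧ qCasorati q A P Q = X ^ (m + n + 1) * S := by
  have hdvd : X ^ (m + n + 1) ∣ qCasorati q A P Q := by
    rw [← X_pow_dvd_coe_iff]
    simpa only [qCasorati, coe_sub, coe_mul, coe_comp_C_mul_X] using
      PowerSeries.X_pow_dvd_qCasorati hY hPade
  obtain ⟨S, hS⟩ := hdvd
  refine ⟨S, natDegree_le_iff_coeff_eq_zero.2 fun k hk => ?_, hS⟩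
  have hdeg := natDegree_qCasorati_le (q := q) hA hP hQ
  have hk : d < k := by exact_mod_cast hk
  rw [← coeff_X_pow_mul S (m + n + 1) k, ← hS]
  exact coeff_eq_zero_of_natDegree_lt (by omega)

end Polynomial

/-- Casorati determinant `D_1` for type q-(A_2+A_1)^{(1)}. -/
theorem casorati_D1_qA2A1
    (q a1 a2 : ℂ) (m n : ℕ)
    (Y : PowerSeries ℂ)
    (hY : (1 - PowerSeries.C a1 * PowerSeries.X) * (1 - PowerSeries.C a2 * PowerSeries.X) *
        PowerSeries.rescale q Y = Y)
    (P Q : Polynomial ℂ) (hdP : P.degree ≤ m) (hdQ : Q.degree ≤ n)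
    (hPade : (PowerSeries.X : PowerSeries ℂ) ^ (m + n + 1) ∣
      Y * (Q : PowerSeries ℂ) - (P : PowerSeries ℂ)) :
    ∃ R : Polynomial ℂ, R.degree ≤ 1 ∧
      P * (Q.comp (C q * X)) -
          (1 - C a1 * X) * (1 - C a2 * X) * (P.comp (C q * X)) * Q =
        X ^ (m + n + 1) * R := by
  have hA : ((1 - C a1 * X) * (1 - C a2 * X)).natDegree ≤ 1 + 1 := by compute_degree
  obtain ⟨R, hR, hcasorati⟩ := exists_qCasorati_eq_X_pow_mul (q := q) (Y := Y)
    (by simpa using hY) hA (natDegree_le_of_degree_le hdP) (natDegree_le_of_degree_le hdQ) hPade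
  exact ⟨R, degree_le_of_natDegree_le hR, hcasorati⟩
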